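/- Let P = (P₀,P₁,P₂) be a probability vector on {0,1,2} with P₀ > 0 and P₂ > 0, set P* = (P₀/(P₀+P₂), 0, P₂/(P₀+P₂)), and let μ^Σ_P be the product probability measure on Σ whose factor at coordinate n ∈ ℤ is P for n ≥ 0 and P* for n < 0. Then for every admissible partition r, the push-forward μ_{r,P} := (J_r)_* μ^Σ_P is a probability measure on [0,1)² and is an eigenmeasure of the open baker B_r with decay rate P₀ + P₂. -/

import Mathlib

open MeasureTheory
open scoped ENNReal

/-- The two-sided shift on `Σ = {0,1,2}^ℤ`. -/
def shiftMap (ε : ℤ → Fin 3) : ℤ → Fin 3 := fun n => ε (n + 1)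

/-- The partition points `α₀ = 0`, `α₁ = r₀`, `α₂ = r₀ + r₁`. -/
def alphaOf (r : Fin 3 → ℝ) : Fin 3 → ℝ := ![0, r 0, r 0 + r 1]

/-- The closed baker's map `B̂_r` on the square `[0,1)²` (extended arbitrarily to `ℝ²`). -/
noncomputable def bakerMap (r : Fin 3 → ℝ) : ℝ × ℝ → ℝ × ℝ := fun x =>
  if x.1 < r 0 then (x.1 / r 0, r 0 * x.2)
  else if x.1 < r 0 + r 1 then ((x.1 - r 0) / r 1, r 1 * x.2 + r 0)
  else ((x.1 - (r 0 + r 1)) / r 2, r 2 * x.2 + (r 0 + r 1))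

/-- The coding map `J_r : Σ → [0,1]²`. -/
noncomputable def codingMap (r : Fin 3 → ℝ) (ε : ℤ → Fin 3) : ℝ × ℝ :=
  (∑' k : ℕ, (∏ i ∈ Finset.range k, r (ε (i : ℤ))) * alphaOf r (ε (k : ℤ)),
   ∑' k : ℕ, (∏ i ∈ Finset.range k, r (ε (-(i + 1) : ℤ))) * alphaOf r (ε (-(k + 1) : ℤ)))

/-- The unit square `[0,1) × [0,1)`. -/
def unitSquare : Set (ℝ × ℝ) := Set.Ico 0 1 ×ˢ Set.Ico 0 1

/-- The hole `H = [r₀, 1-r₂) × [0,1)` of the open baker's map. -/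
def bakerHole (r : Fin 3 → ℝ) : Set (ℝ × ℝ) := Set.Ico (r 0) (1 - r 2) ×ˢ Set.Ico 0 1

/-- `μ` is the product measure on `{0,1,2}^ℤ` with one-site weights `P n` at coordinate `n`. -/
def IsProductMeasure (μ : Measure (ℤ → Fin 3)) (P : ℤ → Fin 3 → ℝ) : Prop :=
  ∀ (s : Finset ℤ) (g : ℤ → Fin 3),
    μ {ε | ∀ i ∈ s, ε i = g i} = ∏ i ∈ s, ENNReal.ofReal (P i (g i))

/-!
For every code outside the null set of sequences whose future or past is constantly `2`, the
coding map satisfies `q(ε) = α_{ε₀} + r_{ε₀} q(σ̂ε)` and `p(σ̂ε) = α_{ε₀} + r_{ε₀} p(ε)`, so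
`B̂_r (J_r ε) = J_r (σ̂ε)`, and `J_r ε` lies in the hole exactly when `ε₀ = 1`. The claim thus
reduces to the symbolic identity `μ(σ̂⁻¹A ∩ {ε₀ ≠ 1}) = (P₀ + P₂) μ(A)`. Since `P*` is `P`
conditioned on `{0, 2}`, conditioning `μ` on `{ε₀ ≠ 1}` and then shifting yields a product measure
with the same one-site weights as `μ`, hence `μ` itself.
-/

open ProbabilityTheory Set

lemma measurableSet_setOf_forall_mem_eq (s : Finset ℤ) (g : ℤ → Fin 3) :
    MeasurableSet {ε : ℤ → Fin 3 | ∀ i ∈ s, ε i = g i} := by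
  simp only [ofPred_forall]
  exact .biInter s.countable_toSet fun i _ => measurable_pi_apply i (measurableSet_singleton _)

lemma measurableSet_setOf_eval_mem (j : ℤ) (T : Finset (Fin 3)) :
    MeasurableSet {ε : ℤ → Fin 3 | ε j ∈ T} :=
  measurable_pi_apply j (Finset.measurableSet T)

lemma measurable_shiftMap : Measurable shiftMap :=
  measurable_pi_lambda _ fun n => measurable_pi_apply (n + 1)

noncomputable def condWeights (p : Fin 3 → ℝ) (T : Finset (Fin 3)) : Fin 3 → ℝ :=
  fun v => if v ∈ T then p v / ∑ u ∈ T, p u else 0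

namespace IsProductMeasure

variable {μ ν : Measure (ℤ → Fin 3)} {w : ℤ → Fin 3 → ℝ}

lemma isProbabilityMeasure (hμ : IsProductMeasure μ w) : IsProbabilityMeasure μ :=
  ⟨by simpa using hμ ∅ 0⟩

theorem ext (hμ : IsProductMeasure μ w) (hν : IsProductMeasure ν w) : μ = ν := by
  have := hμ.isProbabilityMeasure
  have := hν.isProbabilityMeasure
  refine IsProjectiveLimit.unique (P := fun I => μ.map I.restrict) (fun _ => rfl) fun I => ?_
  refine Measure.ext_of_singleton fun (y : I → Fin 3) => ?_
  have hpre : I.restrict (π := fun _ => Fin 3) ⁻¹' {y} =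
      {ε : ℤ → Fin 3 | ∀ i ∈ I, ε i = if h : i ∈ I then y ⟨i, h⟩ else 0} := by
    ext ε
    simpa [funext_iff] using forall₂_congr fun i hi => by simp [hi]
  have hmeas := Finset.measurable_restrict (X := fun _ : ℤ => Fin 3) I
  rw [Measure.map_apply hmeas (measurableSet_singleton y),
    Measure.map_apply hmeas (measurableSet_singleton y), hpre, hμ, hν]

lemma map_shiftMap (hμ : IsProductMeasure μ w) :
    IsProductMeasure (μ.map shiftMap) (fun n => w (n + 1)) := by
  intro s g
  have hpre : shiftMap ⁻¹' {ε | ∀ i ∈ s, ε i = g i} =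
      {ε | ∀ i ∈ s.map (addRightEmbedding 1), ε i = g (i - 1)} := by
    ext ε
    simp [shiftMap]
  rw [Measure.map_apply measurable_shiftMap (measurableSet_setOf_forall_mem_eq s g), hpre, hμ,
    Finset.prod_map]
  simp

lemma measure_forall_eq_eq_zero (hμ : IsProductMeasure μ w) {j : ℕ → ℤ}
    (hj : Function.Injective j) {v : Fin 3} {c : ℝ} (hc : c < 1) (hwc : ∀ k, w (j k) v ≤ c) :
    μ {ε | ∀ k, ε (j k) = v} = 0 := by
  have hle : ∀ n, μ {ε | ∀ k, ε (j k) = v} ≤ ENNReal.ofReal c ^ n := fun n => calc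
    _ ≤ μ {ε | ∀ i ∈ (Finset.range n).map ⟨j, hj⟩, ε i = v} :=
      measure_mono fun ε hε i hi => by
        obtain ⟨k, -, rfl⟩ := Finset.mem_map.1 hi
        exact hε k
    _ = ∏ k ∈ Finset.range n, ENNReal.ofReal (w (j k) v) := by rw [hμ, Finset.prod_map]; rfl
    _ ≤ ENNReal.ofReal c ^ n := by
      simpa using Finset.prod_le_pow_card (Finset.range n) _ _
        fun k _ => ENNReal.ofReal_le_ofReal (hwc k)
  exact le_antisymm (ge_of_tendsto' (ENNReal.tendsto_pow_atTop_nhds_zero_of_lt_one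
    (ENNReal.ofReal_lt_one.mpr hc)) hle) bot_le


lemma measure_inter_setOf_eval_mem (hμ : IsProductMeasure μ w) (T : Finset (Fin 3)) {j : ℤ}
    {s : Finset ℤ} (hj : j ∉ s) (g : ℤ → Fin 3) :
    μ ({ε | ∀ i ∈ s, ε i = g i} ∩ {ε | ε j ∈ T}) =
      (∑ v ∈ T, ENNReal.ofReal (w j v)) * ∏ i ∈ s, ENNReal.ofReal (w i (g i)) := by
  have hupd : ∀ v, ∀ i ∈ s, Function.update g j v i = g i :=
    fun v i hi => Function.update_of_ne (ne_of_mem_of_not_mem hi hj) v g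
  have hsplit : {ε : ℤ → Fin 3 | ∀ i ∈ s, ε i = g i} ∩ {ε | ε j ∈ T} =
      ⋃ v ∈ T, {ε | ∀ i ∈ insert j s, ε i = Function.update g j v i} := by
    ext ε
    simp only [mem_inter_iff, mem_ofPred_eq, mem_iUnion, Finset.forall_mem_insert,
      Function.update_self, exists_prop]
    exact ⟨fun ⟨hs, hT⟩ => ⟨ε j, hT, rfl, fun i hi => (hs i hi).trans (hupd _ i hi).symm⟩,
      fun ⟨v, hv, hεv, hs⟩ => ⟨fun i hi => (hs i hi).trans (hupd v i hi), hεv ▸ hv⟩⟩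
  have hdisj : (T : Set (Fin 3)).PairwiseDisjoint
      fun v => {ε : ℤ → Fin 3 | ∀ i ∈ insert j s, ε i = Function.update g j v i} :=
    fun v _ v' _ hvv' => Set.disjoint_left.2 fun ε h h' => hvv' <| by
      simpa using (h j (s.mem_insert_self j)).symm.trans (h' j (s.mem_insert_self j))
  rw [hsplit, measure_biUnion_finset hdisj fun v _ => measurableSet_setOf_forall_mem_eq _ _,
    Finset.sum_mul]
  refine Finset.sum_congr rfl fun v _ => ?_
  rw [hμ, Finset.prod_insert hj, Function.update_self,
    Finset.prod_congr rfl fun i hi => by rw [hupd v i hi]]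

lemma measure_setOf_eval_mem (hμ : IsProductMeasure μ w) {j : ℤ} (hw : ∀ v, 0 ≤ w j v)
    (T : Finset (Fin 3)) : μ {ε | ε j ∈ T} = ENNReal.ofReal (∑ v ∈ T, w j v) := by
  simpa [ENNReal.ofReal_sum_of_nonneg fun v _ => hw v]
    using hμ.measure_inter_setOf_eval_mem T (Finset.notMem_empty j) 0

theorem cond (hμ : IsProductMeasure μ w) {j : ℤ} {T : Finset (Fin 3)} (hw : ∀ v, 0 ≤ w j v)
    (hT : 0 < ∑ v ∈ T, w j v) :
    IsProductMeasure μ[|{ε | ε j ∈ T}] (Function.update w j (condWeights (w j) T)) := by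
  have hsum : ∑ v ∈ T, ENNReal.ofReal (w j v) = ENNReal.ofReal (∑ v ∈ T, w j v) :=
    (ENNReal.ofReal_sum_of_nonneg fun v _ => hw v).symm
  have hmass0 : ENNReal.ofReal (∑ v ∈ T, w j v) ≠ 0 := ENNReal.ofReal_pos.2 hT |>.ne'
  intro s g
  rw [cond_apply (measurableSet_setOf_eval_mem j T), hμ.measure_setOf_eval_mem hw, inter_comm]
  by_cases hj : j ∈ s
  · have hrest :
        ∏ i ∈ s.erase j, ENNReal.ofReal (Function.update w j (condWeights (w j) T) i (g i)) =
          ∏ i ∈ s.erase j, ENNReal.ofReal (w i (g i)) :=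
      Finset.prod_congr rfl fun i hi => by rw [Function.update_of_ne (Finset.ne_of_mem_erase hi)]
    rw [← Finset.mul_prod_erase s _ hj, Function.update_self, hrest, condWeights]
    by_cases hgT : g j ∈ T
    · have hsub : {ε : ℤ → Fin 3 | ∀ i ∈ s, ε i = g i} ∩ {ε | ε j ∈ T} =
          {ε | ∀ i ∈ s, ε i = g i} :=
        inter_eq_left.2 fun ε hε => by simpa [hε j hj]
      rw [hsub, hμ, ← Finset.mul_prod_erase s _ hj, if_pos hgT, ENNReal.ofReal_div_of_pos hT,
        ENNReal.div_eq_inv_mul, mul_assoc]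
    · have hempty : {ε : ℤ → Fin 3 | ∀ i ∈ s, ε i = g i} ∩ {ε | ε j ∈ T} = ∅ :=
        eq_empty_of_forall_notMem fun ε ⟨hε, hεT⟩ => hgT (hε j hj ▸ hεT)
      simp [hempty, hgT]
  · rw [hμ.measure_inter_setOf_eval_mem T hj, hsum, ← mul_assoc,
      ENNReal.inv_mul_cancel hmass0 ENNReal.ofReal_ne_top, one_mul]
    exact Finset.prod_congr rfl fun i hi => by
      rw [Function.update_of_ne (ne_of_mem_of_not_mem hi hj)]

theorem measure_inter_preimage_shiftMap (hμ : IsProductMeasure μ w) {T : Finset (Fin 3)}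
    (hw : ∀ v, 0 ≤ w 0 v) (hT : 0 < ∑ v ∈ T, w 0 v)
    (hstat : ∀ n, Function.update w 0 (condWeights (w 0) T) (n + 1) = w n)
    {A : Set (ℤ → Fin 3)} (hA : MeasurableSet A) :
    μ ({ε | ε 0 ∈ T} ∩ shiftMap ⁻¹' A) = ENNReal.ofReal (∑ v ∈ T, w 0 v) * μ A := by
  have := hμ.isProbabilityMeasure
  have hmap : μ[|{ε | ε 0 ∈ T}].map shiftMap = μ :=
    (by simpa only [hstat] using (hμ.cond hw hT).map_shiftMap : IsProductMeasure _ w).ext hμ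
  rw [← cond_mul_eq_inter (measurableSet_setOf_eval_mem 0 T), ← Measure.map_apply
    measurable_shiftMap hA, hmap, hμ.measure_setOf_eval_mem hw, mul_comm]

end IsProductMeasure

section Coding

variable {r : Fin 3 → ℝ}

lemma alphaOf_nonneg (hr : ∀ i, 0 ≤ r i) (e : Fin 3) : 0 ≤ alphaOf r e := by
  fin_cases e <;> simp [alphaOf] <;> linarith [hr 0, hr 1]

lemma alphaOf_add_le_one (hr : ∀ i, 0 ≤ r i) (hsum : r 0 + r 1 + r 2 = 1) (e : Fin 3) :
    alphaOf r e + r e ≤ 1 := by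
  fin_cases e <;> simp [alphaOf] <;> linarith [hr 0, hr 1, hr 2]

lemma alphaOf_add_lt_one (hr : ∀ i, 0 < r i) (hsum : r 0 + r 1 + r 2 = 1) {e : Fin 3}
    (he : e ≠ 2) : alphaOf r e + r e < 1 := by
  fin_cases e <;> simp [alphaOf] at he ⊢ <;> linarith [hr 1, hr 2]

noncomputable def codingTerm (r : Fin 3 → ℝ) (ε : ℤ → Fin 3) (k : ℕ) : ℝ :=
  (∏ i ∈ Finset.range k, r (ε i)) * alphaOf r (ε k)

noncomputable def codingCoord (r : Fin 3 → ℝ) (ε : ℤ → Fin 3) : ℝ :=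
  ∑' k, codingTerm r ε k

def reflect (ε : ℤ → Fin 3) : ℤ → Fin 3 := fun n => ε (-(n + 1))

lemma codingMap_eq (r : Fin 3 → ℝ) (ε : ℤ → Fin 3) :
    codingMap r ε = (codingCoord r ε, codingCoord r (reflect ε)) := rfl

lemma codingTerm_nonneg (hr : ∀ i, 0 ≤ r i) (ε : ℤ → Fin 3) (k : ℕ) : 0 ≤ codingTerm r ε k :=
  mul_nonneg (Finset.prod_nonneg fun _ _ => hr _) (alphaOf_nonneg hr _)

lemma sum_range_codingTerm_le (hr : ∀ i, 0 ≤ r i) (hsum : r 0 + r 1 + r 2 = 1)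
    (ε : ℤ → Fin 3) (n : ℕ) :
    ∑ k ∈ Finset.range n, codingTerm r ε k ≤ 1 - ∏ i ∈ Finset.range n, r (ε i) := by
  induction n with
  | zero => simp
  | succ n ih =>
    rw [Finset.sum_range_succ, Finset.prod_range_succ, codingTerm]
    have hprod : 0 ≤ ∏ i ∈ Finset.range n, r (ε i) := Finset.prod_nonneg fun _ _ => hr _
    nlinarith [alphaOf_add_le_one hr hsum (ε n)]

lemma sum_range_codingTerm_le_one (hr : ∀ i, 0 ≤ r i) (hsum : r 0 + r 1 + r 2 = 1)
    (ε : ℤ → Fin 3) (n : ℕ) : ∑ k ∈ Finset.range n, codingTerm r ε k ≤ 1 :=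
  (sum_range_codingTerm_le hr hsum ε n).trans (sub_le_self _ (Finset.prod_nonneg fun _ _ => hr _))

lemma summable_codingTerm (hr : ∀ i, 0 ≤ r i) (hsum : r 0 + r 1 + r 2 = 1) (ε : ℤ → Fin 3) :
    Summable (codingTerm r ε) :=
  summable_of_sum_range_le (codingTerm_nonneg hr ε) (sum_range_codingTerm_le_one hr hsum ε)

lemma codingCoord_nonneg (hr : ∀ i, 0 ≤ r i) (ε : ℤ → Fin 3) : 0 ≤ codingCoord r ε :=
  tsum_nonneg (codingTerm_nonneg hr ε)

lemma codingCoord_le_one (hr : ∀ i, 0 ≤ r i) (hsum : r 0 + r 1 + r 2 = 1) (ε : ℤ → Fin 3) :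
    codingCoord r ε ≤ 1 :=
  Real.tsum_le_of_sum_range_le (codingTerm_nonneg hr ε) (sum_range_codingTerm_le_one hr hsum ε)

lemma codingCoord_eq (hr : ∀ i, 0 ≤ r i) (hsum : r 0 + r 1 + r 2 = 1) (ε : ℤ → Fin 3) :
    codingCoord r ε = alphaOf r (ε 0) + r (ε 0) * codingCoord r (shiftMap ε) := by
  rw [codingCoord, (summable_codingTerm hr hsum ε).tsum_eq_zero_add, codingCoord, ← tsum_mul_left]
  congr 1
  · simp [codingTerm]
  · refine tsum_congr fun k => ?_
    simp only [codingTerm, Finset.prod_range_succ', shiftMap]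
    push_cast
    ring

lemma codingCoord_lt_one (hr : ∀ i, 0 < r i) (hsum : r 0 + r 1 + r 2 = 1) {ε : ℤ → Fin 3}
    (h : ∃ k : ℕ, ε k ≠ 2) : codingCoord r ε < 1 := by
  have hr' i := (hr i).le
  obtain ⟨k, hk⟩ := h
  induction k generalizing ε with
  | zero =>
    rw [codingCoord_eq hr' hsum]
    nlinarith [hr (ε 0), alphaOf_add_lt_one hr hsum (by simpa using hk),
      codingCoord_le_one hr' hsum (shiftMap ε)]
  | succ k ih =>
    rw [codingCoord_eq hr' hsum]
    nlinarith [hr (ε 0), alphaOf_add_le_one hr' hsum (ε 0), ih (ε := shiftMap ε) (by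
      simpa [shiftMap] using hk)]

lemma codingCoord_reflect_shiftMap (hr : ∀ i, 0 ≤ r i) (hsum : r 0 + r 1 + r 2 = 1)
    (ε : ℤ → Fin 3) : codingCoord r (reflect (shiftMap ε)) =
      alphaOf r (ε 0) + r (ε 0) * codingCoord r (reflect ε) := by
  have hrefl : reflect (shiftMap ε) = fun n => ε (-n) := by
    funext n
    simp [reflect, shiftMap]
  have hshift : shiftMap (fun n => ε (-n)) = reflect ε := rfl
  simpa [hrefl, hshift] using codingCoord_eq hr hsum fun n => ε (-n)

end Coding

section Baker

variable {r : Fin 3 → ℝ}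

lemma bakerMap_alphaOf_add_mul (hr : ∀ i, 0 < r i) (e : Fin 3) {x : ℝ} (hx : x ∈ Ico 0 1)
    (y : ℝ) : bakerMap r (alphaOf r e + r e * x, y) = (x, alphaOf r e + r e * y) := by
  obtain ⟨hx0, hx1⟩ := hx
  have := hr 0; have := hr 1; have := hr 2
  fin_cases e
  · simp [bakerMap, alphaOf, show r 0 * x < r 0 by nlinarith]; field_simp
  · simp [bakerMap, alphaOf, show r 1 * x < r 1 by nlinarith, show ¬ r 1 * x < 0 by nlinarith]
    constructor <;> [field_simp; ring]
  · simp [bakerMap, alphaOf, show ¬ r 2 * x < 0 by nlinarith,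
      show ¬ r 0 + r 1 + r 2 * x < r 0 by nlinarith]
    constructor <;> [field_simp; ring]


lemma alphaOf_add_mul_mem_Ico (hr : ∀ i, 0 < r i) (hsum : r 0 + r 1 + r 2 = 1) (e : Fin 3)
    {x : ℝ} (hx : x ∈ Ico 0 1) : alphaOf r e + r e * x ∈ Ico 0 1 := by
  have hr' i := (hr i).le
  obtain ⟨hx0, hx1⟩ := hx
  have := alphaOf_add_le_one hr' hsum e
  have := alphaOf_nonneg hr' e
  constructor <;> nlinarith [hr e]

lemma alphaOf_add_mul_mem_Ico_iff (hr : ∀ i, 0 < r i) (hsum : r 0 + r 1 + r 2 = 1) (e : Fin 3)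
    {x : ℝ} (hx : x ∈ Ico 0 1) : alphaOf r e + r e * x ∈ Ico (r 0) (1 - r 2) ↔ e = 1 := by
  obtain ⟨hx0, hx1⟩ := hx
  have := hr 0; have := hr 1; have := hr 2
  fin_cases e <;> simp [alphaOf]
  · intro; nlinarith
  · constructor <;> nlinarith
  · intro; nlinarith

end Baker

/-- Codes whose future `ε₁ε₂…` and past `ε₋₁ε₋₂…` are not constantly `2`. The other codes are
sent to the right end of a strip `[α_e, α_e + r_e)` or to the line `p = 1`, where `J_r` does not
conjugate the shift to `B̂_r`. -/
def regularCodes : Set (ℤ → Fin 3) :=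
  {ε | (∃ k : ℕ, shiftMap ε k ≠ 2) ∧ ∃ k : ℕ, reflect ε k ≠ 2}

section CodingMap

variable {r : Fin 3 → ℝ}

lemma codingMap_eq_alphaOf_add_mul (hr : ∀ i, 0 ≤ r i) (hsum : r 0 + r 1 + r 2 = 1)
    (ε : ℤ → Fin 3) : codingMap r ε =
      (alphaOf r (ε 0) + r (ε 0) * codingCoord r (shiftMap ε), codingCoord r (reflect ε)) := by
  rw [codingMap_eq, codingCoord_eq hr hsum]

lemma codingMap_shiftMap (hr : ∀ i, 0 ≤ r i) (hsum : r 0 + r 1 + r 2 = 1) (ε : ℤ → Fin 3) :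
    codingMap r (shiftMap ε) =
      (codingCoord r (shiftMap ε), alphaOf r (ε 0) + r (ε 0) * codingCoord r (reflect ε)) := by
  rw [codingMap_eq, codingCoord_reflect_shiftMap hr hsum]

lemma codingCoord_mem_Ico (hr : ∀ i, 0 < r i) (hsum : r 0 + r 1 + r 2 = 1) {ε : ℤ → Fin 3}
    (h : ∃ k : ℕ, ε k ≠ 2) : codingCoord r ε ∈ Ico 0 1 :=
  ⟨codingCoord_nonneg (fun i => (hr i).le) ε, codingCoord_lt_one hr hsum h⟩

lemma bakerMap_codingMap (hr : ∀ i, 0 < r i) (hsum : r 0 + r 1 + r 2 = 1) {ε : ℤ → Fin 3}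
    (h : ∃ k : ℕ, shiftMap ε k ≠ 2) : bakerMap r (codingMap r ε) = codingMap r (shiftMap ε) := by
  have hr' i := (hr i).le
  rw [codingMap_eq_alphaOf_add_mul hr' hsum, codingMap_shiftMap hr' hsum,
    bakerMap_alphaOf_add_mul hr _ (codingCoord_mem_Ico hr hsum h)]

lemma codingMap_mem_unitSquare (hr : ∀ i, 0 < r i) (hsum : r 0 + r 1 + r 2 = 1)
    {ε : ℤ → Fin 3} (hε : ε ∈ regularCodes) : codingMap r ε ∈ unitSquare := by
  rw [codingMap_eq_alphaOf_add_mul (fun i => (hr i).le) hsum]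
  exact ⟨alphaOf_add_mul_mem_Ico hr hsum _ (codingCoord_mem_Ico hr hsum hε.1),
    codingCoord_mem_Ico hr hsum hε.2⟩

lemma codingMap_mem_bakerHole_iff (hr : ∀ i, 0 < r i) (hsum : r 0 + r 1 + r 2 = 1)
    {ε : ℤ → Fin 3} (hε : ε ∈ regularCodes) : codingMap r ε ∈ bakerHole r ↔ ε 0 = 1 := by
  rw [codingMap_eq_alphaOf_add_mul (fun i => (hr i).le) hsum, bakerHole, mem_prod,
    alphaOf_add_mul_mem_Ico_iff hr hsum _ (codingCoord_mem_Ico hr hsum hε.1)]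
  exact and_iff_left (codingCoord_mem_Ico hr hsum hε.2)

lemma codingMap_mem_openBaker_preimage_iff (hr : ∀ i, 0 < r i) (hsum : r 0 + r 1 + r 2 = 1)
    {ε : ℤ → Fin 3} (hε : ε ∈ regularCodes) (S : Set (ℝ × ℝ)) :
    codingMap r ε ∈ bakerMap r ⁻¹' S ∩ (unitSquare \ bakerHole r) ↔
      ε 0 ≠ 1 ∧ codingMap r (shiftMap ε) ∈ S := by
  rw [mem_inter_iff, mem_sdiff, mem_preimage, bakerMap_codingMap hr hsum hε.1,
    codingMap_mem_bakerHole_iff hr hsum hε]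
  simp [codingMap_mem_unitSquare hr hsum hε, and_comm]

end CodingMap

lemma IsProductMeasure.ae_mem_regularCodes {μ : Measure (ℤ → Fin 3)} {w : ℤ → Fin 3 → ℝ}
    (hμ : IsProductMeasure μ w) {c : ℝ} (hc : c < 1) (hw : ∀ n, w n 2 ≤ c) :
    ∀ᵐ ε ∂μ, ε ∈ regularCodes := by
  have hfuture := hμ.measure_forall_eq_eq_zero (j := fun k : ℕ => (k : ℤ) + 1)
    (fun a b h => by simpa using h) hc fun _ => hw _
  have hpast := hμ.measure_forall_eq_eq_zero (j := fun k : ℕ => -((k : ℤ) + 1))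
    (fun a b h => by simpa using h) hc fun _ => hw _
  refine ae_iff.2 (measure_mono_null (fun ε hε => ?_) (measure_union_null hfuture hpast))
  simp only [regularCodes, shiftMap, reflect, mem_ofPred_eq, not_and_or, not_exists,
    not_not] at hε
  exact hε

section Measurability

variable {r : Fin 3 → ℝ}

lemma measurable_codingCoord (hr : ∀ i, 0 ≤ r i) (hsum : r 0 + r 1 + r 2 = 1) :
    Measurable (codingCoord r) := by
  have : Measurable r := .of_discrete
  have : Measurable (alphaOf r) := .of_discrete
  exact measurable_of_tendsto_metrizable (f := fun n ε => ∑ k ∈ Finset.range n, codingTerm r ε k)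
    (fun _ => by unfold codingTerm; fun_prop)
    (tendsto_pi_nhds.2 fun ε => (summable_codingTerm hr hsum ε).hasSum.tendsto_sum_nat)

lemma measurable_reflect : Measurable reflect :=
  measurable_pi_lambda _ fun _ => measurable_pi_apply _

lemma measurable_codingMap (hr : ∀ i, 0 ≤ r i) (hsum : r 0 + r 1 + r 2 = 1) :
    Measurable (codingMap r) :=
  (measurable_codingCoord hr hsum).prodMk
    ((measurable_codingCoord hr hsum).comp measurable_reflect)

lemma measurable_bakerMap (r : Fin 3 → ℝ) : Measurable (bakerMap r) :=
  Measurable.ite (measurableSet_lt measurable_fst measurable_const) (by fun_prop) <|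
    Measurable.ite (measurableSet_lt measurable_fst measurable_const) (by fun_prop) (by fun_prop)

lemma measurableSet_unitSquare : MeasurableSet unitSquare :=
  measurableSet_Ico.prod measurableSet_Ico

lemma measurableSet_bakerHole (r : Fin 3 → ℝ) : MeasurableSet (bakerHole r) :=
  measurableSet_Ico.prod measurableSet_Ico

end Measurability

theorem IsProductMeasure.measure_setOf_ne_one_inter_preimage_shiftMap {P : Fin 3 → ℝ}
    (hP : ∀ i, 0 ≤ P i) (hP02 : 0 < P 0 + P 2) {μ : Measure (ℤ → Fin 3)}
    (hμ : IsProductMeasure μ fun n i =>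
      if 0 ≤ n then P i else if i = 1 then 0 else P i / (P 0 + P 2))
    {A : Set (ℤ → Fin 3)} (hA : MeasurableSet A) :
    μ ({ε | ε 0 ≠ 1} ∩ shiftMap ⁻¹' A) = ENNReal.ofReal (P 0 + P 2) * μ A := by
  have hT : ∑ v ∈ Finset.univ.erase 1, P v = P 0 + P 2 := by
    rw [show Finset.univ.erase (1 : Fin 3) = {0, 2} by decide, Finset.sum_pair (by decide)]
  convert hμ.measure_inter_preimage_shiftMap (T := Finset.univ.erase 1)
    (fun v => by simpa using hP v) (by simpa [hT] using hP02) (fun n => ?_) hA using 3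
  · simp
  · simp [hT]
  · funext v
    rcases eq_or_ne n (-1) with rfl | hn
    · fin_cases v <;> simp [condWeights, hT]
    · rw [Function.update_of_ne (by omega)]
      simp only [show 0 ≤ n + 1 ↔ 0 ≤ n by omega]

theorem bernoulli_pushforward_eigenmeasure_of_baker_general
    (P : Fin 3 → ℝ) (hP : ∀ i, 0 ≤ P i) (hPsum : P 0 + P 1 + P 2 = 1)
    (hP0 : 0 < P 0)
    (Pstar : Fin 3 → ℝ)
    (hPstar : Pstar = fun i => if i = 1 then 0 else P i / (P 0 + P 2))
    (muS : Measure (ℤ → Fin 3))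
    (hmuS : IsProductMeasure muS (fun n i => if 0 ≤ n then P i else Pstar i))
    (r : Fin 3 → ℝ) (hr : ∀ i, 0 < r i) (hsum : r 0 + r 1 + r 2 = 1) :
    IsProbabilityMeasure (muS.map (codingMap r)) ∧
    (muS.map (codingMap r)) unitSquare = 1 ∧
    ∀ S : Set (ℝ × ℝ), MeasurableSet S →
      (muS.map (codingMap r)) (bakerMap r ⁻¹' S ∩ (unitSquare \ bakerHole r))
        = ENNReal.ofReal (P 0 + P 2) * (muS.map (codingMap r)) S := by
  subst hPstar
  have := hmuS.isProbabilityMeasure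
  have hP02 : 0 < P 0 + P 2 := by linarith [hP 2]
  have hJ := measurable_codingMap (fun i => (hr i).le) hsum
  have hreg : ∀ᵐ ε ∂muS, ε ∈ regularCodes :=
    hmuS.ae_mem_regularCodes (c := max (P 2) (P 2 / (P 0 + P 2)))
      (max_lt (by linarith [hP 1]) ((div_lt_one hP02).2 (by linarith))) fun n => by
        split_ifs <;> simp
  refine ⟨Measure.isProbabilityMeasure_map hJ.aemeasurable, ?_, fun S hS => ?_⟩
  · rw [Measure.map_apply hJ measurableSet_unitSquare]
    exact (mem_ae_iff_prob_eq_one (hJ measurableSet_unitSquare)).1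
      (hreg.mono fun ε => codingMap_mem_unitSquare hr hsum)
  · rw [Measure.map_apply hJ hS, Measure.map_apply hJ ((measurable_bakerMap r hS).inter
      (measurableSet_unitSquare.diff (measurableSet_bakerHole r))),
      ← hmuS.measure_setOf_ne_one_inter_preimage_shiftMap hP hP02 (hJ hS)]
    exact measure_congr (hreg.mono fun ε hε =>
      propext (codingMap_mem_openBaker_preimage_iff hr hsum hε S))

/-- For a probability vector `P` with `P₀ > 0` and `P₂ > 0`, and
`P* = (P₀/(P₀+P₂), 0, P₂/(P₀+P₂))`, the push-forward under `J_r` of the product measure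
with factor `P` at coordinates `n ≥ 0` and `P*` at coordinates `n < 0` is, for every
admissible partition `r`, a probability measure on `[0,1)²` and an eigenmeasure of the
open baker `B_r` with decay rate `P₀ + P₂`. -/
theorem bernoulli_pushforward_eigenmeasure_of_baker
    (P : Fin 3 → ℝ) (hP : ∀ i, 0 ≤ P i) (hPsum : P 0 + P 1 + P 2 = 1)
    (hP0 : 0 < P 0) (hP2 : 0 < P 2)
    (Pstar : Fin 3 → ℝ)
    (hPstar : Pstar = fun i => if i = 1 then 0 else P i / (P 0 + P 2))
    (muS : Measure (ℤ → Fin 3)) [IsProbabilityMeasure muS]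
    (hmuS : IsProductMeasure muS (fun n i => if 0 ≤ n then P i else Pstar i))
    (r : Fin 3 → ℝ) (hr : ∀ i, 0 < r i) (hsum : r 0 + r 1 + r 2 = 1) :
    IsProbabilityMeasure (muS.map (codingMap r)) ∧
    (muS.map (codingMap r)) unitSquare = 1 ∧
    ∀ S : Set (ℝ × ℝ), MeasurableSet S →
      (muS.map (codingMap r)) (bakerMap r ⁻¹' S ∩ (unitSquare \ bakerHole r))
        = ENNReal.ofReal (P 0 + P 2) * (muS.map (codingMap r)) S :=
  bernoulli_pushforward_eigenmeasure_of_baker_general P hP hPsum hP0 Pstar hPstar muS hmuS r hr hsum
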